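/- Let A be a Noetherian ring and I an ideal of A. The following are equivalent: (i) ⊕_{n≥0} (I^n)‾ T^n is a finitely generated module over the Rees algebra ⊕_{n≥0} I^n T^n; (ii) there exists an integer N such that I·(I^n)‾ = (I^{n+1})‾ for all n ≥ N. -/

import Mathlib

/-!
The ideals `Jₙ = (Iⁿ)‾` form an `I`-filtration of `A`: they decrease, and `I·Jₙ ⊆ Jₙ₊₁`, since
multiplying an equation of integral dependence of `f` over `Iⁿ` by `xᵏ`, for `x ∈ I`, gives one of
`x f` over `Iⁿ⁺¹`. Under `A[X] ≅ PolynomialModule A A`, `⊕ Jₙ Tⁿ` is the Rees module of this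
filtration, and for a filtration by finitely generated submodules that module is finitely generated
over the Rees algebra exactly when the filtration is `I`-stable
(`Ideal.Filtration.submodule_fg_iff_stable`).
-/

/-- `f` is integral over the ideal `I`: there is an equation
`f^k + a₁ f^(k-1) + ⋯ + a_k = 0` with `aᵢ ∈ Iⁱ` (and `k ≥ 1`). -/
def IsIntegralOverIdeal {A : Type*} [CommRing A] (I : Ideal A) (f : A) : Prop :=
  ∃ (k : ℕ) (a : ℕ → A), 0 < k ∧ (∀ i ∈ Finset.Icc 1 k, a i ∈ I ^ i) ∧
    f ^ k + ∑ i ∈ Finset.Icc 1 k, a i * f ^ (k - i) = 0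

section IsIntegralOverIdeal

variable {A : Type*} [CommRing A] {I K : Ideal A} {f : A}

theorem IsIntegralOverIdeal.mono (hIK : I ≤ K) (hf : IsIntegralOverIdeal I f) :
    IsIntegralOverIdeal K f := by
  obtain ⟨k, a, hk, ha, heq⟩ := hf
  exact ⟨k, a, hk, fun i hi => Ideal.pow_right_mono hIK i (ha i hi), heq⟩

theorem IsIntegralOverIdeal.mul_left {x : A} (hx : x ∈ I) (hf : IsIntegralOverIdeal K f) :
    IsIntegralOverIdeal (I * K) (x * f) := by
  obtain ⟨k, a, hk, ha, heq⟩ := hf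
  refine ⟨k, fun i => x ^ i * a i, hk, fun i hi => ?_, ?_⟩
  · rw [mul_pow]
    exact Ideal.mul_mem_mul (Ideal.pow_mem_pow hx i) (ha i hi)
  · have hterm : ∀ i ∈ Finset.Icc 1 k,
        x ^ i * a i * (x * f) ^ (k - i) = x ^ k * (a i * f ^ (k - i)) := by
      intro i hi
      rw [mul_pow, ← Nat.add_sub_cancel' (Finset.mem_Icc.mp hi).2, pow_add]
      simp only [Nat.add_sub_cancel_left]
      ring
    rw [Finset.sum_congr rfl hterm, ← Finset.mul_sum, mul_pow, ← mul_add, heq, mul_zero]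

end IsIntegralOverIdeal

section Filtration

open Polynomial

variable {A : Type*} [CommRing A] {I : Ideal A}

def Ideal.integralClosurePowFiltration (I : Ideal A) (J : ℕ → Ideal A)
    (hJ : ∀ n f, f ∈ J n ↔ IsIntegralOverIdeal (I ^ n) f) : I.Filtration A where
  N := J
  mono n f hf := (hJ n f).2 <| ((hJ (n + 1) f).1 hf).mono <| Ideal.pow_le_pow_right n.le_succ
  smul_le n := Ideal.mul_le.2 fun x hx f hf => (hJ (n + 1) _).2 <| by
    rw [pow_succ']
    exact ((hJ n f).1 hf).mul_left hx

namespace Ideal.Filtration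

noncomputable def polynomialSubmodule (F : I.Filtration A) : Submodule (reesAlgebra I) A[X] :=
  F.submodule.map
    (PolynomialModule.equivPolynomialSelf.restrictScalars (reesAlgebra I)).toLinearMap

theorem mem_polynomialSubmodule (F : I.Filtration A) {p : A[X]} :
    p ∈ F.polynomialSubmodule ↔ ∀ n, p.coeff n ∈ F.N n :=
  Submodule.mem_map_equiv _

theorem polynomialSubmodule_fg_iff_stable [IsNoetherianRing A] (F : I.Filtration A) :
    F.polynomialSubmodule.FG ↔ F.Stable :=
  (Submodule.fg_map_iff _ (LinearEquiv.injective _)).trans <|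
    F.submodule_fg_iff_stable fun n => IsNoetherian.noetherian (F.N n)

end Ideal.Filtration

end Filtration

theorem Submodule.exists_finset_subset_le_span_iff_fg {R M : Type*} [Semiring R] [AddCommMonoid M]
    [Module R M] (N : Submodule R M) :
    (∃ s : Finset M, (∀ x ∈ s, x ∈ N) ∧ ∀ x ∈ N, x ∈ span R (s : Set M)) ↔ N.FG :=
  ⟨fun ⟨s, hsN, hNs⟩ => ⟨s, le_antisymm (span_le.2 hsN) hNs⟩,
    fun ⟨s, hs⟩ => ⟨s, fun _ hx => hs ▸ subset_span hx, fun _ hx => hs ▸ hx⟩⟩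

open Polynomial in
/-- For a Noetherian ring `A` and ideal `I`, with `Jbar n = (Iⁿ)‾`:
`⊕ (Iⁿ)‾ Tⁿ` is a finitely generated module over the Rees algebra `⊕ Iⁿ Tⁿ`
iff there is an `N` with `I·(Iⁿ)‾ = (Iⁿ⁺¹)‾` for all `n ≥ N`. -/
theorem barRees_fg_iff_stable {A : Type*} [CommRing A] [IsNoetherianRing A]
    (I : Ideal A) (Jbar : ℕ → Ideal A)
    (hJbar : ∀ n : ℕ, ∀ f : A, f ∈ Jbar n ↔ IsIntegralOverIdeal (I ^ n) f) :
    (∃ s : Finset A[X],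
        (∀ p ∈ s, ∀ n : ℕ, p.coeff n ∈ Jbar n) ∧
        ∀ p : A[X], (∀ n : ℕ, p.coeff n ∈ Jbar n) →
          p ∈ Submodule.span (reesAlgebra I) (s : Set A[X])) ↔
    (∃ N : ℕ, ∀ n ≥ N, I * Jbar n = Jbar (n + 1)) := by
  set F := I.integralClosurePowFiltration Jbar hJbar
  have key := F.polynomialSubmodule.exists_finset_subset_le_span_iff_fg.trans
    F.polynomialSubmodule_fg_iff_stable
  simp only [F.mem_polynomialSubmodule] at key
  exact key
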